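/- Let F : Y → [0, +∞) be convex and Fréchet differentiable with gradient ∇F, let J : X → ℝ ∪ {+∞} be proper and convex, and let u† ∈ X with F(Ku†) = 0 (exact data). Suppose the Bregman iterates satisfy, for all k ≥ 1: p^{k−1} ∈ ∂J(u^{k−1}) and p^k := p^{k−1} − K*∇F(Ku^k) ∈ ∂J(u^k), and suppose the initialization satisfies D_J^{p⁰}(u†, u⁰) < ∞. Then for every N ≥ 1 one has ∑_{k=1}^{N} F(Ku^k) ≤ D_J^{p⁰}(u†, u⁰); in particular ∑_{k=1}^{∞} F(Ku^k) < ∞. -/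

import Mathlib

/-!
Write `D k := D_J^{p^k}(u†, u^k)`, which is nonnegative because `p^k ∈ ∂J(u^k)`. Since
`p^{k+1} - p^k = -K*∇F(Ku^{k+1})`, the difference `D k - D (k+1)` splits into the Bregman distance
`D_J^{p^k}(u^{k+1}, u^k) ≥ 0` plus `⟨∇F(Ku^{k+1}), Ku^{k+1} - Ku†⟩`, and the latter dominates
`F(Ku^{k+1}) - F(Ku†) = F(Ku^{k+1})` by convexity of `F`. Telescoping bounds the partial sums
by `D 0`.
-/

open scoped RealInnerProductSpace

/-- Subgradient of an extended-real-valued convex function: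
p ∈ ∂J(v) means J(w) ≥ J(v) + ⟨p, w − v⟩ for all w. -/
def ESubgradAt {X : Type*} [NormedAddCommGroup X] [InnerProductSpace ℝ X]
    (J : X → EReal) (p v : X) : Prop :=
  ∀ w, J v + (⟪p, w - v⟫ : ℝ) ≤ J w

/-- Generalized Bregman distance D_J^p(u, v) := J(u) − J(v) − ⟨p, u − v⟩. -/
noncomputable def ebreg {X : Type*} [NormedAddCommGroup X] [InnerProductSpace ℝ X]
    (J : X → EReal) (p u v : X) : EReal :=
  J u - J v - (⟪p, u - v⟫ : ℝ)

theorem ConvexOn.add_inner_le_of_hasGradientAt {Y : Type*} [NormedAddCommGroup Y]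
    [InnerProductSpace ℝ Y] [CompleteSpace Y] {F : Y → ℝ} {g y : Y}
    (hF : ConvexOn ℝ Set.univ F) (hg : HasGradientAt F g y) (w : Y) :
    F y + ⟪g, w - y⟫ ≤ F w := by
  have hconv : ConvexOn ℝ Set.univ (F ∘ AffineMap.lineMap (k := ℝ) y w) := hF.comp_affineMap _
  have hderiv : HasDerivAt (F ∘ AffineMap.lineMap (k := ℝ) y w) ⟪g, w - y⟫ 0 := by
    have hg0 : HasGradientAt F g (AffineMap.lineMap y w (0 : ℝ)) := by simpa using hg
    simpa using hg0.hasFDerivAt.comp_hasDerivAt (0 : ℝ) AffineMap.hasDerivAt_lineMap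
  have hslope := hconv.le_slope_of_hasDerivAt (Set.mem_univ 0) (Set.mem_univ 1) zero_lt_one hderiv
  simp only [slope_def_field, Function.comp_apply, AffineMap.lineMap_apply_one,
    AffineMap.lineMap_apply_zero, sub_zero, div_one] at hslope
  linarith

theorem Finset.sum_range_le_of_le_sub_succ {f D : ℕ → ℝ} (hf : ∀ k, f k ≤ D k - D (k + 1))
    (hD : ∀ k, 0 ≤ D k) (N : ℕ) : ∑ k ∈ Finset.range N, f k ≤ D 0 := by
  have htelescope := Finset.sum_le_sum fun k (_ : k ∈ Finset.range N) => hf k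
  rw [Finset.sum_range_sub'] at htelescope
  linarith [hD N]

section Bregman

variable {X : Type*} [NormedAddCommGroup X] [InnerProductSpace ℝ X]

def bregmanDist (j : X → ℝ) (p u v : X) : ℝ :=
  j u - j v - ⟪p, u - v⟫

theorem ebreg_eq_coe_bregmanDist {J : X → EReal} {p u v : X} (hu : J u ≠ ⊤) (hu' : J u ≠ ⊥)
    (hv : J v ≠ ⊤) (hv' : J v ≠ ⊥) :
    ebreg J p u v = (bregmanDist (fun x => (J x).toReal) p u v : EReal) := by
  rw [ebreg, bregmanDist, ← EReal.coe_toReal hu hu', ← EReal.coe_toReal hv hv']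
  rfl

theorem ne_top_of_ebreg_lt_top {J : X → EReal} {p u v : X} (h : ebreg J p u v < ⊤)
    (hv : J v ≠ ⊤) : J u ≠ ⊤ := by
  intro hu
  rw [ebreg, hu, EReal.top_sub hv, EReal.top_sub_coe] at h
  exact lt_irrefl _ h

theorem ESubgradAt.ne_top {J : X → EReal} {p v w : X} (h : ESubgradAt J p v) (hw : J w ≠ ⊤) :
    J v ≠ ⊤ := by
  intro hv
  have hle := h w
  rw [hv, EReal.top_add_coe, top_le_iff] at hle
  exact hw hle

theorem ESubgradAt.toReal_add_inner_le {J : X → EReal} {p v w : X} (h : ESubgradAt J p v)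
    (hv : J v ≠ ⊥) (hw : J w ≠ ⊤) (hw' : J w ≠ ⊥) :
    (J v).toReal + ⟪p, w - v⟫ ≤ (J w).toReal := by
  have hle := h w
  rw [← EReal.coe_toReal (h.ne_top hw) hv, ← EReal.coe_toReal hw hw', ← EReal.coe_add] at hle
  exact_mod_cast hle

variable {Y : Type*} [NormedAddCommGroup Y] [InnerProductSpace ℝ Y]
  [CompleteSpace X] [CompleteSpace Y]

theorem bregmanDist_step_le {j : X → ℝ} {F : Y → ℝ} {g : Y} (K : X →L[ℝ] Y) {p u u' w : X}
    (hF : ConvexOn ℝ Set.univ F) (hg : HasGradientAt F g (K u'))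
    (hsub : j u + ⟪p, u' - u⟫ ≤ j u') :
    F (K u') - F (K w) + bregmanDist j (p - ContinuousLinearMap.adjoint K g) w u'
      ≤ bregmanDist j p w u := by
  have hgrad := hF.add_inner_le_of_hasGradientAt hg (K w)
  rw [← map_sub, ← ContinuousLinearMap.adjoint_inner_left] at hgrad
  simp only [bregmanDist, inner_sub_left, inner_sub_right] at hgrad hsub ⊢
  linarith

end Bregman

theorem stmt_10_general
    {X Y : Type*} [NormedAddCommGroup X] [InnerProductSpace ℝ X] [CompleteSpace X]
    [NormedAddCommGroup Y] [InnerProductSpace ℝ Y] [CompleteSpace Y]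
    (K : X →L[ℝ] Y)
    (F : Y → ℝ) (gF : Y → Y)
    (hFgrad : ∀ y, HasGradientAt F (gF y) y)
    (hFconv : ConvexOn ℝ Set.univ F) (hFnonneg : ∀ y, 0 ≤ F y)
    (J : X → EReal)
    (hJbot : ∀ u, J u ≠ ⊥)
    (hJproper : ∃ u, J u ≠ ⊤)
    (udag : X) (hexact : F (K udag) = 0)
    (u p : ℕ → X)
    (hsub : ∀ k, ESubgradAt J (p k) (u k))
    (hrec : ∀ k : ℕ, 1 ≤ k → p k = p (k - 1) - ContinuousLinearMap.adjoint K (gF (K (u k))))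
    (hinit : ebreg J (p 0) udag (u 0) < ⊤) :
    (∀ N : ℕ, 1 ≤ N →
        ((∑ k ∈ Finset.Icc 1 N, F (K (u k)) : ℝ) : EReal) ≤ ebreg J (p 0) udag (u 0))
    ∧ Summable (fun k : ℕ => F (K (u (k + 1)))) := by
  obtain ⟨w₀, hw₀⟩ := hJproper
  have hu_fin : ∀ k, J (u k) ≠ ⊤ := fun k => (hsub k).ne_top hw₀
  have hdag_fin : J udag ≠ ⊤ := ne_top_of_ebreg_lt_top hinit (hu_fin 0)
  set D : ℕ → ℝ := fun k => bregmanDist (fun x => (J x).toReal) (p k) udag (u k)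
  have hD_nonneg : ∀ k, 0 ≤ D k := fun k => by
    have hsub_dag := (hsub k).toReal_add_inner_le (hJbot _) hdag_fin (hJbot _)
    simp only [D, bregmanDist]
    linarith
  have hdescent : ∀ k, F (K (u (k + 1))) ≤ D k - D (k + 1) := fun k => by
    have hstep := bregmanDist_step_le (j := fun x => (J x).toReal) K (w := udag) hFconv (hFgrad _)
      ((hsub k).toReal_add_inner_le (hJbot _) (hu_fin (k + 1)) (hJbot _))
    have hp : p (k + 1) = p k - ContinuousLinearMap.adjoint K (gF (K (u (k + 1)))) := by
      simpa using hrec (k + 1) (Nat.le_add_left 1 k)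
    rw [hexact, ← hp] at hstep
    simp only [D]
    linarith
  have hpartial := Finset.sum_range_le_of_le_sub_succ hdescent hD_nonneg
  refine ⟨fun N _ => ?_, summable_of_sum_range_le (fun _ => hFnonneg _) hpartial⟩
  have hIcc : ∑ k ∈ Finset.Icc 1 N, F (K (u k)) = ∑ k ∈ Finset.range N, F (K (u (k + 1))) := by
    rw [Finset.range_eq_Ico, Finset.sum_Ico_add' (fun k => F (K (u k))), zero_add,
      Finset.Ico_add_one_right_eq_Icc]
  rw [ebreg_eq_coe_bregmanDist hdag_fin (hJbot _) (hu_fin 0) (hJbot _), hIcc]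
  exact_mod_cast hpartial N

/-- **Summability of the fidelities along the Bregman iteration for exact data.**
F : Y → [0, ∞) convex Fréchet differentiable with gradient ∇F, J proper convex,
F(Ku†) = 0 (exact data). If the Bregman iterates satisfy p^k ∈ ∂J(u^k) with
p^k = p^{k−1} − K*∇F(Ku^k) for k ≥ 1, and D_J^{p⁰}(u†, u⁰) < ∞, then
∑_{k=1}^{N} F(Ku^k) ≤ D_J^{p⁰}(u†, u⁰) for all N ≥ 1; in particular
∑_{k=1}^{∞} F(Ku^k) < ∞. -/
theorem stmt_10
    {X Y : Type*} [NormedAddCommGroup X] [InnerProductSpace ℝ X] [CompleteSpace X]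
    [NormedAddCommGroup Y] [InnerProductSpace ℝ Y] [CompleteSpace Y]
    (K : X →L[ℝ] Y)
    (F : Y → ℝ) (gF : Y → Y)
    (hFgrad : ∀ y, HasGradientAt F (gF y) y)
    (hFconv : ConvexOn ℝ Set.univ F) (hFnonneg : ∀ y, 0 ≤ F y)
    (J : X → EReal)
    (hJbot : ∀ u, J u ≠ ⊥)
    (hJproper : ∃ u, J u ≠ ⊤)
    (hJconv : ∀ u v : X, ∀ t : ℝ, 0 ≤ t → t ≤ 1 →
      J (t • u + (1 - t) • v) ≤ (t : EReal) * J u + ((1 - t : ℝ) : EReal) * J v)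
    (udag : X) (hexact : F (K udag) = 0)
    (u p : ℕ → X)
    (hsub : ∀ k, ESubgradAt J (p k) (u k))
    (hrec : ∀ k : ℕ, 1 ≤ k → p k = p (k - 1) - ContinuousLinearMap.adjoint K (gF (K (u k))))
    (hinit : ebreg J (p 0) udag (u 0) < ⊤) :
    (∀ N : ℕ, 1 ≤ N →
        ((∑ k ∈ Finset.Icc 1 N, F (K (u k)) : ℝ) : EReal) ≤ ebreg J (p 0) udag (u 0))
    ∧ Summable (fun k : ℕ => F (K (u (k + 1)))) :=
  stmt_10_general K F gF hFgrad hFconv hFnonneg J hJbot hJproper udag hexact u p hsub hrec hinit
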